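/- Fix Δ > 0 and a real r with 0 ≤ r < Δ. The map i ↦ E⁺(i, r) is monotone nondecreasing on the set of reals i ≤ 0, and moreover, if r > 0 then E⁺(i, r) > 0 for every i ≤ 0; and for each fixed i ≤ 0 the map r ↦ E⁺(i, r) is monotone nondecreasing on [0, ∞). -/

import Mathlib

/-!
Differentiating in `r` gives `∂E⁺/∂r = (Φ⁺)'(i) - (Φ⁺)'(i - r)`, which is positive for `r > 0`
because `(Φ⁺)'` is strictly increasing; together with `E⁺(i, 0) = 0` this gives the last two
claims. Differentiating in `i` gives `(Φ⁺)'(i - r) - (Φ⁺)'(i) + r (Φ⁺)''(i)`, the first-order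
Taylor remainder of `(Φ⁺)'` itself, which is nonnegative for `i ≤ 0` since the logistic function
`(Φ⁺)'` is convex on `(-∞, 0]`.
-/

/-- Φ⁺(x) = log₂(1 + 2^x) -/
noncomputable def Phip (x : ℝ) : ℝ := Real.logb 2 (1 + (2:ℝ) ^ x)

/-- (Φ⁺)'(x) = 2^x / (2^x + 1) -/
noncomputable def dPhip (x : ℝ) : ℝ := (2:ℝ) ^ x / ((2:ℝ) ^ x + 1)

/-- First-order Taylor remainder E⁺(i, r) = Φ⁺(i − r) − Φ⁺(i) + r·(Φ⁺)'(i) -/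
noncomputable def Ep (i r : ℝ) : ℝ := Phip (i - r) - Phip i + r * dPhip i

open Real Set

noncomputable def d2Phip (x : ℝ) : ℝ := log 2 * ((2:ℝ) ^ x / ((2:ℝ) ^ x + 1) ^ 2)

lemma hasDerivAt_two_rpow (x : ℝ) : HasDerivAt (fun x : ℝ => (2:ℝ) ^ x) ((2:ℝ) ^ x * log 2) x :=
  (hasStrictDerivAt_const_rpow two_pos x).hasDerivAt

lemma hasDerivAt_Phip (x : ℝ) : HasDerivAt Phip (dPhip x) x := by
  have hpos : 0 < 1 + (2:ℝ) ^ x := by positivity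
  have h := (((hasDerivAt_two_rpow x).const_add 1).log hpos.ne').div_const (log 2)
  refine h.congr_deriv ?_
  have : log 2 ≠ 0 := by positivity
  unfold dPhip
  field_simp
  ring

lemma hasDerivAt_dPhip (x : ℝ) : HasDerivAt dPhip (d2Phip x) x := by
  have hne : (2:ℝ) ^ x + 1 ≠ 0 := by positivity
  refine ((hasDerivAt_two_rpow x).div ((hasDerivAt_two_rpow x).add_const 1) hne).congr_deriv ?_
  unfold d2Phip
  field_simp
  ring

lemma dPhip_strictMono : StrictMono dPhip := by
  intro a b hab
  have ha : 0 < (2:ℝ) ^ a := by positivity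
  have hab' : (2:ℝ) ^ a < (2:ℝ) ^ b := rpow_lt_rpow_of_exponent_lt one_lt_two hab
  unfold dPhip
  rw [div_lt_div_iff₀ (by positivity) (by positivity)]
  linarith

lemma monotoneOn_div_add_one_sq : MonotoneOn (fun u : ℝ => u / (u + 1) ^ 2) (Icc 0 1) := by
  intro a ⟨ha0, ha1⟩ b ⟨hb0, hb1⟩ hab
  dsimp only
  -- b (a + 1)² - a (b + 1)² = (b - a) (1 - a b)
  rw [div_le_div_iff₀ (by positivity) (by positivity)]
  nlinarith [mul_nonneg (sub_nonneg.2 hab) (sub_nonneg.2 (mul_le_one₀ ha1 hb0 hb1))]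

lemma d2Phip_monotoneOn : MonotoneOn d2Phip (Iic 0) := by
  intro a ha b hb hab
  have mem : ∀ x ∈ Iic (0:ℝ), (2:ℝ) ^ x ∈ Icc 0 1 := fun x hx =>
    ⟨by positivity, rpow_le_one_of_one_le_of_nonpos one_le_two hx⟩
  exact mul_le_mul_of_nonneg_left (monotoneOn_div_add_one_sq (mem a ha) (mem b hb)
    (rpow_le_rpow_of_exponent_le one_le_two hab)) (log_nonneg one_le_two)

lemma dPhip_convexOn : ConvexOn ℝ (Iic 0) dPhip := by
  have hderiv : deriv dPhip = d2Phip := funext fun x => (hasDerivAt_dPhip x).deriv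
  refine MonotoneOn.convexOn_of_deriv (convex_Iic 0)
    (fun x _ => (hasDerivAt_dPhip x).continuousAt.continuousWithinAt)
    (fun x _ => (hasDerivAt_dPhip x).differentiableAt.differentiableWithinAt) ?_
  rw [hderiv, interior_Iic]
  exact d2Phip_monotoneOn.mono Iio_subset_Iic_self

lemma dPhip_sub_le {x r : ℝ} (hx : x ≤ 0) (hr : 0 ≤ r) :
    dPhip x - dPhip (x - r) ≤ r * d2Phip x := by
  rcases hr.eq_or_lt with rfl | hr
  · simp
  have h := dPhip_convexOn.slope_le_of_hasDerivAt (x := x - r) (by simp; linarith) hx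
    (by linarith) (hasDerivAt_dPhip x)
  rw [slope_def_field, sub_sub_cancel, div_le_iff₀ hr] at h
  linarith

lemma hasDerivAt_Ep_left (i r : ℝ) :
    HasDerivAt (fun i => Ep i r) (dPhip (i - r) - dPhip i + r * d2Phip i) i :=
  (((hasDerivAt_Phip (i - r)).comp_sub_const i r).sub (hasDerivAt_Phip i)).add
    ((hasDerivAt_dPhip i).const_mul r)

lemma hasDerivAt_Ep_right (i r : ℝ) :
    HasDerivAt (Ep i) (dPhip i - dPhip (i - r)) r := by
  have h : HasDerivAt (fun r => Phip (i - r) - Phip i + r * dPhip i)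
      (-dPhip (i - r) + dPhip i) r :=
    (((hasDerivAt_Phip (i - r)).comp_const_sub i r).sub_const (Phip i)).add
      (hasDerivAt_mul_const (dPhip i))
  exact h.congr_deriv (by ring)

lemma Ep_monotoneOn_left {r : ℝ} (hr : 0 ≤ r) : MonotoneOn (fun i => Ep i r) (Iic 0) := by
  refine monotoneOn_of_deriv_nonneg (convex_Iic 0)
    (fun x _ => (hasDerivAt_Ep_left x r).continuousAt.continuousWithinAt)
    (fun x _ => (hasDerivAt_Ep_left x r).differentiableAt.differentiableWithinAt) fun x hx => ?_
  rw [interior_Iic] at hx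
  rw [(hasDerivAt_Ep_left x r).deriv]
  linarith [dPhip_sub_le (le_of_lt hx) hr]

lemma Ep_strictMonoOn_right (i : ℝ) : StrictMonoOn (Ep i) (Ici 0) := by
  refine strictMonoOn_of_deriv_pos (convex_Ici 0)
    (fun r _ => (hasDerivAt_Ep_right i r).continuousAt.continuousWithinAt) fun r hr => ?_
  rw [interior_Ici] at hr
  rw [(hasDerivAt_Ep_right i r).deriv, sub_pos]
  exact dPhip_strictMono (sub_lt_self i hr)

lemma Ep_zero_right (i : ℝ) : Ep i 0 = 0 := by
  simp [Ep]

theorem stmt_1_general (r : ℝ) (hr0 : 0 ≤ r) :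
    (∀ i₁ i₂ : ℝ, i₁ ≤ i₂ → i₂ ≤ 0 → Ep i₁ r ≤ Ep i₂ r) ∧
    (0 < r → ∀ i : ℝ, i ≤ 0 → 0 < Ep i r) ∧
    (∀ i : ℝ, i ≤ 0 → ∀ r₁ r₂ : ℝ, 0 ≤ r₁ → r₁ ≤ r₂ → Ep i r₁ ≤ Ep i r₂) := by
  refine ⟨?_, ?_, ?_⟩
  · exact fun i₁ i₂ h12 h2 => Ep_monotoneOn_left hr0 (h12.trans h2) h2 h12
  · intro hr i _
    simpa [Ep_zero_right] using Ep_strictMonoOn_right i self_mem_Ici hr0 hr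
  · exact fun i _ r₁ r₂ h1 h12 => (Ep_strictMonoOn_right i).monotoneOn h1 (h1.trans h12) h12

theorem stmt_1 (Δ : ℝ) (hΔ : 0 < Δ) (r : ℝ) (hr0 : 0 ≤ r) (hrΔ : r < Δ) :
    (∀ i₁ i₂ : ℝ, i₁ ≤ i₂ → i₂ ≤ 0 → Ep i₁ r ≤ Ep i₂ r) ∧
    (0 < r → ∀ i : ℝ, i ≤ 0 → 0 < Ep i r) ∧
    (∀ i : ℝ, i ≤ 0 → ∀ r₁ r₂ : ℝ, 0 ≤ r₁ → r₁ ≤ r₂ → Ep i r₁ ≤ Ep i r₂) :=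
  stmt_1_general r hr0
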